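/- For a ∈ ℤ^n with a_j ≤ 0 for all j (so H_a = ∅ and G_a = {j : a_j < 0}), the simplicial complex Δ_a equals the link lk_Δ(G_a) of G_a in the simplicial complex Δ corresponding to the Stanley–Reisner ideal √I, when I is a squarefree monomial ideal. -/
import Mathlib

/- STATEMENT 7: For a squarefree monomial ideal I (Stanley–Reisner ideal of Δ) and
a ∈ ℤ^n with a_j ≤ 0 for all j, the complex Δ_a equals the link lk_Δ(G_a).
`G : Finset (Fin n → ℕ)` is the minimal set of monomial generators (exponent
vectors; squarefree: all exponents ≤ 1, and generators are nonzero). -/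

open Finset

def Ga {n : ℕ} (a : Fin n → ℤ) : Finset (Fin n) := Finset.univ.filter (fun i => a i < 0)

def deltaA {n : ℕ} (G : Finset (Fin n → ℕ)) (a : Fin n → ℤ) : Set (Finset (Fin n)) :=
  { s | ∃ F : Finset (Fin n), Ga a ⊆ F ∧
      (∀ u ∈ G, ∃ j, j ∉ F ∧ 0 ≤ a j ∧ a j < (u j : ℤ)) ∧ s = F \ Ga a }

def msupp {n : ℕ} (u : Fin n → ℕ) : Finset (Fin n) := Finset.univ.filter (fun i => u i ≠ 0)

/-- The simplicial complex `Δ` with Stanley–Reisner ideal `I`. -/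
def SRcomplex {n : ℕ} (G : Finset (Fin n → ℕ)) : Set (Finset (Fin n)) :=
  { F | ∀ u ∈ G, ¬ msupp u ⊆ F }

/-- The link `lk_Δ F = { L : L ∩ F = ∅, L ∪ F ∈ Δ }`. -/
def link {n : ℕ} (Δ : Set (Finset (Fin n))) (F : Finset (Fin n)) : Set (Finset (Fin n)) :=
  { L | L ∩ F = ∅ ∧ L ∪ F ∈ Δ }

theorem deltaA_eq_link {n : ℕ} (G : Finset (Fin n → ℕ))
    (hsf : ∀ u ∈ G, ∀ j, u j ≤ 1) (hne : ∀ u ∈ G, u ≠ 0)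
    (a : Fin n → ℤ) (ha : ∀ j, a j ≤ 0) :
    deltaA G a = link (SRcomplex G) (Ga a) := by
  ext s
  constructor
  · rintro ⟨F, hGF, hcond, rfl⟩
    constructor
    · ext j
      simp [Ga, Finset.mem_inter, Finset.mem_sdiff, Finset.mem_filter]
    · have hU : (F \ Ga a) ∪ Ga a = F := Finset.sdiff_union_of_subset hGF
      rw [hU]
      intro u hu hsub
      obtain ⟨j, hjF, haj, hlt⟩ := hcond u hu
      have hj : j ∈ msupp u := by
        simp [msupp]
        intro h
        omega
      exact hjF (hsub hj)
  · rintro ⟨hdisj, hmem⟩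
    refine ⟨s ∪ Ga a, Finset.subset_union_right, ?_, ?_⟩
    · intro u hu
      obtain ⟨j, hjm, hjF⟩ := Finset.not_subset.mp (hmem u hu)
      refine ⟨j, hjF, ?_, ?_⟩
      · have : j ∉ Ga a := fun h => hjF (Finset.mem_union_right _ h)
        simp [Ga] at this
        omega
      · have : j ∉ Ga a := fun h => hjF (Finset.mem_union_right _ h)
        simp [Ga] at this
        simp [msupp] at hjm
        have := ha j
        omega
    · rw [Finset.union_sdiff_right]
      exact (Finset.sdiff_eq_self_iff_disjoint.mpr
        (Finset.disjoint_iff_inter_eq_empty.mpr hdisj)).symm
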